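/- arXiv:2006.13092 — 2 statements merged into one kernel-verified Lean document; each statement's English description precedes it below -/
import Mathlib

section
/- Let φ₀ < φ₁ be real numbers. Define A = log((1 + e^{−φ₀})/(1 + e^{−φ₁})) and B = log((1 + e^{φ₁})/(1 + e^{φ₀})). Then A > 0, B > 0, and the unique real solution g of the equation σ(g)·A − σ(−g)·B = 0 is g = log(B/A) = log( log((1+e^{φ₁})/(1+e^{φ₀})) / log((1+e^{−φ₀})/(1+e^{−φ₁})) ). -/
noncomputable def sigmoid (x : ℝ) : ℝ := 1 / (1 + Real.exp (-x))

lemma sigmoid_mul (g : ℝ) : sigmoid g = Real.exp g * sigmoid (-g) := by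
  unfold sigmoid
  rw [neg_neg]
  have h1 : (0:ℝ) < 1 + Real.exp (-g) := by positivity
  have h2 : (0:ℝ) < 1 + Real.exp g := by positivity
  have he : Real.exp g * Real.exp (-g) = 1 := by
    rw [← Real.exp_add]; simp
  field_simp
  nlinarith [he]

lemma sigmoid_pos (g : ℝ) : 0 < sigmoid g := by
  unfold sigmoid; positivity

theorem imax_bin_edge_stationary_point (φ₀ φ₁ : ℝ) (h : φ₀ < φ₁) (A B : ℝ)
    (hA : A = Real.log ((1 + Real.exp (-φ₀)) / (1 + Real.exp (-φ₁))))
    (hB : B = Real.log ((1 + Real.exp φ₁) / (1 + Real.exp φ₀))) :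
    0 < A ∧ 0 < B ∧
    (∀ g : ℝ, sigmoid g * A - sigmoid (-g) * B = 0 ↔ g = Real.log (B / A)) := by
  have hp0 : (0:ℝ) < 1 + Real.exp (-φ₁) := by positivity
  have hq0 : (0:ℝ) < 1 + Real.exp φ₀ := by positivity
  have hApos : 0 < A := by
    rw [hA]
    apply Real.log_pos
    rw [lt_div_iff₀ hp0]
    have := Real.exp_lt_exp.mpr (neg_lt_neg h)
    linarith
  have hBpos : 0 < B := by
    rw [hB]
    apply Real.log_pos
    rw [lt_div_iff₀ hq0]
    have := Real.exp_lt_exp.mpr h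
    linarith
  refine ⟨hApos, hBpos, fun g => ?_⟩
  have hs := sigmoid_pos (-g)
  constructor
  · intro heq
    rw [sigmoid_mul g] at heq
    have : Real.exp g * A = B := by
      have : sigmoid (-g) * (Real.exp g * A - B) = 0 := by ring_nf; ring_nf at heq; linarith
      have := (mul_eq_zero.mp this).resolve_left (ne_of_gt hs)
      linarith
    have hBA : B / A = Real.exp g := by
      field_simp [ne_of_gt hApos] at this ⊢
      linarith
    rw [hBA, Real.log_exp]
  · intro hg
    have hBA : Real.exp g = B / A := by
      rw [hg, Real.exp_log (by positivity)]
    rw [sigmoid_mul g, hBA]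
    field_simp
    ring
end

section
/- Let φ₀ < φ₁ be real numbers and let g = log( log((1+e^{φ₁})/(1+e^{φ₀})) / log((1+e^{−φ₀})/(1+e^{−φ₁})) ) be the I-Max optimal bin edge between bins with parameters φ₀ and φ₁. Then φ₀ < g < φ₁. -/
private lemma one_add_exp_pos (x : ℝ) : (0:ℝ) < 1 + Real.exp x := by positivity

private lemma log_one_add_exp (x : ℝ) :
    Real.log (1 + Real.exp x) = x + Real.log (1 + Real.exp (-x)) := by
  have h1 : 1 + Real.exp x = Real.exp x * (1 + Real.exp (-x)) := by
    rw [mul_add, mul_one, ← Real.exp_add]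
    simp [add_comm]
  rw [h1, Real.log_mul (Real.exp_ne_zero x) (ne_of_gt (one_add_exp_pos (-x))),
    Real.log_exp]

private lemma hasDeriv_f (x : ℝ) :
    HasDerivAt (fun t => Real.log (1 + Real.exp (-t)))
      (-(Real.exp (-x) / (1 + Real.exp (-x)))) x := by
  have h1 : HasDerivAt (fun t : ℝ => -t) (-1) x := (hasDerivAt_id x).neg
  have h2 : HasDerivAt (fun t : ℝ => Real.exp (-t)) (Real.exp (-x) * (-1)) x := h1.exp
  have h3 : HasDerivAt (fun t : ℝ => 1 + Real.exp (-t)) (Real.exp (-x) * (-1)) x :=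
    h2.const_add 1
  have h4 := h3.log (ne_of_gt (one_add_exp_pos (-x)))
  convert h4 using 1
  ring

theorem imax_bin_edge_between (φ₀ φ₁ : ℝ) (h : φ₀ < φ₁) (g : ℝ)
    (hg : g = Real.log (Real.log ((1 + Real.exp φ₁) / (1 + Real.exp φ₀)) /
        Real.log ((1 + Real.exp (-φ₀)) / (1 + Real.exp (-φ₁))))) :
    φ₀ < g ∧ g < φ₁ := by
  set d := φ₁ - φ₀ with hd
  have hdpos : 0 < d := by simp [hd]; linarith
  set A := Real.log ((1 + Real.exp φ₁) / (1 + Real.exp φ₀)) with hA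
  set B := Real.log ((1 + Real.exp (-φ₀)) / (1 + Real.exp (-φ₁))) with hB
  have hAeq : A = Real.log (1 + Real.exp φ₁) - Real.log (1 + Real.exp φ₀) := by
    rw [hA, Real.log_div (ne_of_gt (one_add_exp_pos φ₁)) (ne_of_gt (one_add_exp_pos φ₀))]
  have hBeq : B = Real.log (1 + Real.exp (-φ₀)) - Real.log (1 + Real.exp (-φ₁)) := by
    rw [hB, Real.log_div (ne_of_gt (one_add_exp_pos (-φ₀))) (ne_of_gt (one_add_exp_pos (-φ₁)))]
  have hAB : A = d - B := by
    rw [hAeq, hBeq, log_one_add_exp φ₁, log_one_add_exp φ₀, hd]; ring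
  -- Mean value theorem for f t = log(1 + exp(-t))
  obtain ⟨c, hc, hceq⟩ := exists_hasDerivAt_eq_slope
    (fun t => Real.log (1 + Real.exp (-t)))
    (fun t => -(Real.exp (-t) / (1 + Real.exp (-t)))) h
    (fun t _ => (hasDeriv_f t).continuousAt.continuousWithinAt)
    (fun t _ => hasDeriv_f t)
  have hcd : Real.exp (-c) / (1 + Real.exp (-c)) =
      (Real.log (1 + Real.exp (-φ₀)) - Real.log (1 + Real.exp (-φ₁))) / d := by
    have := hceq
    rw [← hd] at this
    field_simp at this ⊢
    linarith [this]
  have hBc : B = d * (Real.exp (-c) / (1 + Real.exp (-c))) := by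
    rw [hBeq, hcd]
    field_simp
  set s := Real.exp (-c) / (1 + Real.exp (-c)) with hs
  have hspos : 0 < s := by positivity
  clear_value d A B s
  have hBpos : 0 < B := by rw [hBc]; positivity
  -- key inequalities
  have h₀c : φ₀ < c := hc.1
  have hcφ : c < φ₁ := hc.2
  have hs1 : (1 + Real.exp φ₀) * s < 1 := by
    have h1 : Real.exp φ₀ * Real.exp (-c) < 1 := by
      rw [← Real.exp_add]
      have h0 : φ₀ + -c < 0 := by linarith
      calc Real.exp (φ₀ + -c) < Real.exp 0 := Real.exp_lt_exp.mpr h0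
        _ = 1 := Real.exp_zero
    rw [hs, ← mul_div_assoc, div_lt_one (one_add_exp_pos (-c))]
    nlinarith [Real.exp_pos (-c)]
  have hkey1 : (1 + Real.exp φ₀) * B < d := by
    rw [hBc]
    nlinarith [hs1, hdpos]
  have hs2 : 1 < (1 + Real.exp φ₁) * s := by
    have h1 : 1 < Real.exp φ₁ * Real.exp (-c) := by
      rw [← Real.exp_add]
      have h0 : 0 < φ₁ + -c := by linarith
      calc (1:ℝ) = Real.exp 0 := Real.exp_zero.symm
        _ < Real.exp (φ₁ + -c) := Real.exp_lt_exp.mpr h0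
    rw [hs, ← mul_div_assoc, lt_div_iff₀ (one_add_exp_pos (-c))]
    nlinarith [Real.exp_pos (-c)]
  have hkey2 : d < (1 + Real.exp φ₁) * B := by
    rw [hBc]
    nlinarith [hs2, hdpos]
  have hApos : 0 < A := by
    rw [hAB]
    nlinarith [mul_pos (Real.exp_pos φ₀) hBpos, hkey1]
  have hgeq : g = Real.log A - Real.log B := by
    rw [hg, Real.log_div (ne_of_gt hApos) (ne_of_gt hBpos)]
  constructor
  · rw [hgeq]
    have : Real.log (Real.exp φ₀ * B) < Real.log A := by
      apply Real.log_lt_log (by positivity)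
      rw [hAB]
      nlinarith [hkey1, mul_pos (Real.exp_pos φ₀) hBpos]
    rw [Real.log_mul (Real.exp_ne_zero _) (ne_of_gt hBpos), Real.log_exp] at this
    linarith
  · rw [hgeq]
    have : Real.log A < Real.log (Real.exp φ₁ * B) := by
      apply Real.log_lt_log hApos
      rw [hAB]
      nlinarith [hkey2]
    rw [Real.log_mul (Real.exp_ne_zero _) (ne_of_gt hBpos), Real.log_exp] at this
    linarith
end
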